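/- In the setting of the hyperelliptic residue data, for every index j ∈ {1,…,g}: Σ_{n=1}^N A12_n/(u_n − q_j)² = −w_j·∏_{β≠j}(q_j − q_β)·(α_j + 2·Σ_{β≠j} 1/(q_j − q_β) − Σ_{m=1}^N 1/(q_j − u_m)). -/

import Mathlib

/-!
With `U = ∏_m (X - u_m)` and `F = a12Numerator q w a`, `A12_n = F(u_n) / U'(u_n)`, and `F` has
degree `≤ 2g < N`. So the `A12_n` are the residues of `F / U` and, by partial fractions,
`Σ_n A12_n / (u_n - x)² = -(F / U)'(x) = (F U' - F' U)(x) / U(x)²`. At `x = q_j` the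
normalisation of `w_j` gives `U(q_j) = w_j⁻²`, and only the `j`-th summand of `F` contributes
to `F(q_j)` and `F'(q_j)`, since the others vanish to second order at `q_j`.
-/

open Finset

/-- The residue `A12^{(n)}` of the function `A₁₂(u)` associated with the differential `Ω`
on the hyperelliptic curve `v² = ∏_{m=1}^N (u − u_m)`, as an explicit rational expression:
`A12_n = [Σ_j (1/(u_n−q_j) + α_j)·∏_{β≠j}(u_n−q_β)/(w_j·∏_{β≠j}(q_j−q_β))]
          · ∏_β (u_n−q_β) / ∏_{m≠n}(u_n−u_m)`. -/
noncomputable def A12res {g N : ℕ} (u : Fin N → ℂ) (q w a : Fin g → ℂ) (n : Fin N) : ℂ :=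
  (∑ j, (1 / (u n - q j) + a j) * (∏ β ∈ univ.erase j, (u n - q β)) /
      (w j * ∏ β ∈ univ.erase j, (q j - q β))) *
    (∏ β, (u n - q β)) / ∏ m ∈ univ.erase n, (u n - u m)

/-- The value `Ω_∞ = Ω(P_∞) = −2·Σ_j α_j/(w_j·∏_{β≠j}(q_j−q_β))`. -/
noncomputable def OmegaInfty {g : ℕ} (q w a : Fin g → ℂ) : ℂ :=
  -2 * ∑ j, a j / (w j * ∏ β ∈ univ.erase j, (q j - q β))

/-- The coefficient
`β_n = A12_n·(Σ_j 1/(w_j·(u_n−q_j)·∏_{β≠j}(q_j−q_β)) − Ω_∞/2)`. -/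
noncomputable def betaCoef {g N : ℕ} (u : Fin N → ℂ) (q w a : Fin g → ℂ) (n : Fin N) : ℂ :=
  A12res u q w a n *
    ((∑ j, 1 / (w j * (u n - q j) * ∏ β ∈ univ.erase j, (q j - q β))) -
      OmegaInfty q w a / 2)

open Polynomial Lagrange

section Nodal

variable {K ι : Type*} [Field K] [DecidableEq ι] {s : Finset ι} {v : ι → K}

theorem Lagrange.eq_sum_C_nodalWeight_mul_nodal_erase (hvs : Set.InjOn v s) {p : K[X]}
    (hp : p.degree < #s) :
    p = ∑ i ∈ s, C (nodalWeight s v i * p.eval (v i)) * nodal (s.erase i) v := by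
  conv_lhs => rw [eq_interpolate hvs hp, interpolate_eq_nodalWeight_mul_nodal_div_X_sub_C]
  refine sum_congr rfl fun i hi => ?_
  rw [← nodal_erase_eq_nodal_div hi, C_mul]
  ring

theorem Lagrange.wronskian_nodal_erase_nodal {R : Type*} [CommRing R] {w : ι → R} {i : ι}
    (hi : i ∈ s) : wronskian (nodal (s.erase i) w) (nodal s w) = nodal (s.erase i) w ^ 2 := by
  rw [wronskian, nodal_eq_mul_nodal_erase hi, derivative_mul]
  simp only [derivative_sub, derivative_X, derivative_C, sub_zero]
  ring

theorem Lagrange.wronskian_nodal_eq_sum (hvs : Set.InjOn v s) {p : K[X]} (hp : p.degree < #s) :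
    wronskian p (nodal s v) =
      ∑ i ∈ s, C (nodalWeight s v i * p.eval (v i)) * nodal (s.erase i) v ^ 2 := by
  conv_lhs => rw [eq_sum_C_nodalWeight_mul_nodal_erase hvs hp]
  rw [← wronskianBilin_apply, map_sum, LinearMap.sum_apply]
  refine sum_congr rfl fun i hi => ?_
  rw [← smul_eq_C_mul, ← smul_eq_C_mul, map_smul, LinearMap.smul_apply, wronskianBilin_apply,
    wronskian_nodal_erase_nodal hi]

theorem Lagrange.sum_nodalWeight_mul_eval_div_sub_sq (hvs : Set.InjOn v s) {p : K[X]}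
    (hp : p.degree < #s) {x : K} (hx : ∀ i ∈ s, x ≠ v i) :
    ∑ i ∈ s, nodalWeight s v i * p.eval (v i) / (v i - x) ^ 2 =
      (wronskian p (nodal s v)).eval x / (nodal s v).eval x ^ 2 := by
  rw [wronskian_nodal_eq_sum hvs hp, eval_finsetSum, sum_div]
  refine sum_congr rfl fun i hi => ?_
  have hxi : v i - x ≠ 0 := sub_ne_zero_of_ne (hx i hi).symm
  have hE : (nodal (s.erase i) v).eval x ≠ 0 :=
    eval_nodal_not_at_node fun j hj => hx j (mem_of_mem_erase hj)
  rw [nodal_eq_mul_nodal_erase hi, eval_mul, eval_pow, eval_C, eval_mul, eval_sub, eval_X,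
    eval_C, mul_pow, ← neg_sub (v i) x, neg_sq]
  field_simp

theorem Lagrange.eval_derivative_nodal_not_at_node {x : K} (hx : ∀ i ∈ s, x ≠ v i) :
    (derivative (nodal s v)).eval x = (nodal s v).eval x * ∑ i ∈ s, (x - v i)⁻¹ := by
  rw [derivative_nodal, eval_finsetSum, Finset.mul_sum]
  refine sum_congr rfl fun i hi => ?_
  rw [nodal_eq_mul_nodal_erase hi, eval_mul, eval_sub, eval_X, eval_C,
    mul_comm (x - v i), mul_assoc, mul_inv_cancel₀ (sub_ne_zero_of_ne (hx i hi)), mul_one]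

end Nodal

theorem Polynomial.eval_derivative_mul_of_isRoot {R : Type*} [CommSemiring R] {p r : R[X]}
    {x : R} (hp : p.IsRoot x) (hr : r.IsRoot x) : (derivative (p * r)).eval x = 0 := by
  simp [derivative_mul, hp.eq_zero, hr.eq_zero]

/-- `A12_n = F(u_n) / ∏_{m≠n}(u_n - u_m)`: multiplying the bracket of `A12res` by `∏_β (u_n - q_β)`
clears the pole at `q_k` of its `k`-th summand. -/
noncomputable def a12Numerator {K : Type*} [Field K] {g : ℕ} (q w a : Fin g → K) : K[X] :=
  ∑ k, C (w k * ∏ β ∈ univ.erase k, (q k - q β))⁻¹ *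
    (nodal (univ.erase k) q * (nodal (univ.erase k) q + C (a k) * nodal univ q))

section a12Numerator

variable {K : Type*} [Field K] {g : ℕ} {q : Fin g → K} (w a : Fin g → K)

theorem degree_a12Numerator_lt : (a12Numerator q w a).degree < ↑(2 * g + 1) := by
  refine (degree_le_of_natDegree_le (n := 2 * g) ?_).trans_lt (by exact_mod_cast by omega)
  refine natDegree_sum_le_of_forall_le _ _ fun k _ => ?_
  have hE : (nodal (univ.erase k) q).natDegree ≤ g := by
    rw [natDegree_nodal]
    exact (card_erase_le).trans_eq (card_fin g)
  have hP : (C (a k) * nodal univ q).natDegree ≤ g :=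
    natDegree_C_mul_le _ _ |>.trans_eq (by rw [natDegree_nodal, card_fin])
  calc _ ≤ _ := natDegree_C_mul_le _ _
    _ ≤ _ := natDegree_mul_le
    _ ≤ g + g := add_le_add hE (natDegree_add_le_of_degree_le hE hP)
    _ = 2 * g := by omega

variable (hq : ∀ i j, i ≠ j → q i ≠ q j) (j : Fin g)
include hq

theorem eval_a12Numerator :
    (a12Numerator q w a).eval (q j) = (∏ β ∈ univ.erase j, (q j - q β)) / w j := by
  have hD : (∏ β ∈ univ.erase j, (q j - q β)) ≠ 0 :=
    prod_ne_zero_iff.2 fun β hβ => sub_ne_zero_of_ne (hq j β (ne_of_mem_erase hβ).symm)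
  rw [a12Numerator, eval_finsetSum, sum_eq_single j]
  · simp only [eval_mul, eval_add, eval_C, eval_nodal_at_node (mem_univ j), eval_nodal,
      mul_zero, add_zero]
    field_simp
  · intro k _ hkj
    simp [eval_nodal_at_node (mem_erase.2 ⟨Ne.symm hkj, mem_univ j⟩)]
  · simp

theorem eval_derivative_a12Numerator :
    (derivative (a12Numerator q w a)).eval (q j) =
      (∏ β ∈ univ.erase j, (q j - q β)) * (2 * ∑ β ∈ univ.erase j, (q j - q β)⁻¹ + a j) / w j := by
  have hnode : ∀ β ∈ univ.erase j, q j ≠ q β := fun β hβ => hq j β (ne_of_mem_erase hβ).symm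
  have hD : (∏ β ∈ univ.erase j, (q j - q β)) ≠ 0 :=
    prod_ne_zero_iff.2 fun β hβ => sub_ne_zero_of_ne (hnode β hβ)
  rw [a12Numerator, derivative_sum, eval_finsetSum, sum_eq_single j]
  · rw [derivative_C_mul]
    simp only [derivative_mul, derivative_add, eval_mul, eval_add, eval_C,
      eval_derivative_nodal_not_at_node hnode, eval_nodal_derivative_eval_node_eq (mem_univ j),
      eval_nodal_at_node (mem_univ j), eval_nodal, mul_zero, add_zero]
    field_simp
    ring
  · intro k _ hkj
    have hroot : (nodal (univ.erase k) q).IsRoot (q j) :=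
      eval_nodal_at_node (mem_erase.2 ⟨Ne.symm hkj, mem_univ j⟩)
    have hroot' : (nodal (univ.erase k) q + C (a k) * nodal univ q).IsRoot (q j) := by
      simp [hroot.eq_zero, eval_nodal_at_node (mem_univ j)]
    rw [derivative_C_mul, eval_mul, eval_derivative_mul_of_isRoot hroot hroot', mul_zero]
  · simp

end a12Numerator

theorem A12res_eq_nodalWeight_mul_eval {g N : ℕ} {u : Fin N → ℂ} {q : Fin g → ℂ}
    (w a : Fin g → ℂ) (hqu : ∀ j n, q j ≠ u n) (n : Fin N) :
    A12res u q w a n = nodalWeight univ u n * (a12Numerator q w a).eval (u n) := by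
  have hclear : (∑ k, (1 / (u n - q k) + a k) * (∏ β ∈ univ.erase k, (u n - q β)) /
      (w k * ∏ β ∈ univ.erase k, (q k - q β))) * ∏ β, (u n - q β) =
      (a12Numerator q w a).eval (u n) := by
    rw [a12Numerator, eval_finsetSum, sum_mul]
    refine sum_congr rfl fun k _ => ?_
    have hk : u n - q k ≠ 0 := sub_ne_zero_of_ne (hqu k n).symm
    simp only [eval_mul, eval_add, eval_C, eval_nodal, ← mul_prod_erase univ _ (mem_univ k)]
    field_simp
  rw [A12res, hclear, nodalWeight, prod_inv_distrib, div_eq_mul_inv, mul_comm]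

theorem sum_A12_second_order_pole_general {g N : ℕ} (hN : N = 2 * g + 1)
    (u : Fin N → ℂ) (q w a : Fin g → ℂ)
    (hu : ∀ m n : Fin N, m ≠ n → u m ≠ u n)
    (hq : ∀ i j : Fin g, i ≠ j → q i ≠ q j)
    (hqu : ∀ (j : Fin g) (n : Fin N), q j ≠ u n)
    (hw : ∀ j, (w j) ^ 2 * ∏ m, (q j - u m) = 1)
    (j : Fin g) :
    ∑ n, A12res u q w a n / (u n - q j) ^ 2 =
      -(w j * ∏ β ∈ univ.erase j, (q j - q β)) *
        (a j + 2 * (∑ β ∈ univ.erase j, 1 / (q j - q β)) - ∑ m, 1 / (q j - u m)) := by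
  have hw0 : w j ≠ 0 := fun h => by simpa [h] using hw j
  have hinj : Set.InjOn u (univ : Finset (Fin N)) := fun m _ n _ h =>
    by_contra fun hmn => hu m n hmn h
  have hnode : ∀ m ∈ univ, q j ≠ u m := fun m _ => hqu j m
  have hdeg : (a12Numerator q w a).degree < #(univ : Finset (Fin N)) := by
    rw [card_univ, Fintype.card_fin, hN]
    exact degree_a12Numerator_lt w a
  have hU : (nodal univ u).eval (q j) = (w j ^ 2)⁻¹ := by
    rw [eval_nodal]
    exact eq_inv_of_mul_eq_one_right (hw j)
  calc ∑ n, A12res u q w a n / (u n - q j) ^ 2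
      = ∑ n, nodalWeight univ u n * (a12Numerator q w a).eval (u n) / (u n - q j) ^ 2 := by
        simp_rw [A12res_eq_nodalWeight_mul_eval w a hqu]
    _ = (wronskian (a12Numerator q w a) (nodal univ u)).eval (q j) /
          (nodal univ u).eval (q j) ^ 2 :=
        sum_nodalWeight_mul_eval_div_sub_sq hinj hdeg hnode
    _ = _ := by
      rw [wronskian, eval_sub, eval_mul, eval_mul, eval_derivative_nodal_not_at_node hnode, hU,
        eval_a12Numerator w a hq, eval_derivative_a12Numerator w a hq]
      simp only [one_div]
      field_simp
      ring

/-- In the setting of the hyperelliptic residue data, for every `j`,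
`Σ_n A12_n/(u_n − q_j)²
  = −w_j·∏_{β≠j}(q_j − q_β)·(α_j + 2·Σ_{β≠j} 1/(q_j − q_β) − Σ_m 1/(q_j − u_m))`. -/
theorem sum_A12_second_order_pole {g N : ℕ} (hg : 1 ≤ g) (hN : N = 2 * g + 1)
    (u : Fin N → ℂ) (q w a : Fin g → ℂ)
    (hu : ∀ m n : Fin N, m ≠ n → u m ≠ u n)
    (hq : ∀ i j : Fin g, i ≠ j → q i ≠ q j)
    (hqu : ∀ (j : Fin g) (n : Fin N), q j ≠ u n)
    (hw : ∀ j, (w j) ^ 2 * ∏ m, (q j - u m) = 1)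
    (j : Fin g) :
    ∑ n, A12res u q w a n / (u n - q j) ^ 2 =
      -(w j * ∏ β ∈ univ.erase j, (q j - q β)) *
        (a j + 2 * (∑ β ∈ univ.erase j, 1 / (q j - q β)) - ∑ m, 1 / (q j - u m)) :=
  sum_A12_second_order_pole_general hN u q w a hu hq hqu hw j
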